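/- arXiv:2208.14310 — 2 statements merged into one kernel-verified Lean document; each statement's English description precedes it below -/
import Mathlib

section
/- Let d ≥ 1 and let λ : {0,…,d−1} → ℝ be nonnegative with ∑_j λ_j² = 1. Let ψ = ∑_j λ_j e_j ⊗ e_j ∈ ℂ^d ⊗ ℂ^d, where {e_j} is the standard basis. Then the negativity of the pure state projector |ψ⟩⟨ψ| (with respect to the bipartition into the two tensor factors) equals ((∑_j λ_j)² − 1)/2. -/
/-!
The partial transpose of `|ψ⟩⟨ψ|` for `ψ = ∑ λ_j e_j ⊗ e_j` is the swap operator weighted by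
`λ_i λ_j`, so its square is diagonal with entries `(λ_i λ_j)²`. Comparing characteristic
polynomials of this square, the absolute values of the eigenvalues are the numbers `λ_i λ_j`,
which sum to `(∑ λ_j)²`, while the eigenvalues themselves sum to the trace `∑ λ_j² = 1`.
The negativity is half the difference of these two sums.
-/

open scoped Matrix Kronecker ComplexOrder

noncomputable section

/-- Hermitian inner product on `n → ℂ` (conjugate-linear in the first argument). -/
def cinner {n : Type*} [Fintype n] (v w : n → ℂ) : ℂ :=
  ∑ i, (starRingEnd ℂ) (v i) * w i

/-- Tensor (Kronecker) product of vectors. -/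
def tensorVec {α β : Type*} (v : α → ℂ) (w : β → ℂ) : α × β → ℂ :=
  fun p => v p.1 * w p.2

/-- The projector `|v⟩⟨v|`. -/
def vecProj {n : Type*} (v : n → ℂ) : Matrix n n ℂ :=
  Matrix.of fun i j => v i * (starRingEnd ℂ) (v j)

/-- A density matrix: positive semidefinite with unit trace. -/
def IsDensityMatrix {n : Type*} [Fintype n] (ρ : Matrix n n ℂ) : Prop :=
  ρ.PosSemidef ∧ ρ.trace = 1

open Classical in
/-- Positive semidefinite square root (0 on non-PSD input). -/
def msqrt {n : Type*} [Fintype n] [DecidableEq n] (ρ : Matrix n n ℂ) : Matrix n n ℂ :=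
  if h : ρ.PosSemidef then
    (h.1.eigenvectorUnitary : Matrix n n ℂ) * Matrix.diagonal ((↑) ∘ (√·) ∘ h.1.eigenvalues) *
      (star h.1.eigenvectorUnitary : Matrix n n ℂ) else 0

/-- Uhlmann root fidelity `F(ρ,σ) = tr √(√ρ σ √ρ)`. -/
def rootFidelity {n : Type*} [Fintype n] [DecidableEq n] (ρ σ : Matrix n n ℂ) : ℝ :=
  ((msqrt (msqrt ρ * σ * msqrt ρ)).trace).re

/-- Partial trace over the second tensor factor. -/
def ptraceC {α γ : Type*} [Fintype γ] (ρ : Matrix (α × γ) (α × γ) ℂ) : Matrix α α ℂ :=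
  Matrix.of fun i j => ∑ k, ρ (i, k) (j, k)

/-- Partial trace over the first tensor factor. -/
def ptraceA {α β : Type*} [Fintype α] (ρ : Matrix (α × β) (α × β) ℂ) : Matrix β β ℂ :=
  Matrix.of fun i j => ∑ k, ρ (k, i) (k, j)

/-- Partial transpose on the second tensor factor. -/
def ptB {α β : Type*} (ρ : Matrix (α × β) (α × β) ℂ) : Matrix (α × β) (α × β) ℂ :=
  Matrix.of fun p q => ρ (p.1, q.2) (q.1, p.2)

open Classical in
/-- Negativity: the sum of the absolute values of the negative eigenvalues of
the partial transpose (0 if the partial transpose is not Hermitian). -/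
def negativity {α β : Type*} [Fintype α] [Fintype β] [DecidableEq α] [DecidableEq β]
    (ρ : Matrix (α × β) (α × β) ℂ) : ℝ :=
  if h : (ptB ρ).IsHermitian then ∑ i, max 0 (- h.eigenvalues i) else 0

/-- A family of vectors is an orthonormal basis family (orthonormal, indexed by the
same finite type as the dimension, hence a basis). -/
def IsONB {n : Type*} [Fintype n] [DecidableEq n] (x : n → n → ℂ) : Prop :=
  ∀ j k, cinner (x j) (x k) = if j = k then 1 else 0

/-- Separability: a finite convex combination of projectors onto product unit vectors. -/
def IsSeparableDM {α β : Type*} [Fintype α] [Fintype β]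
    (ρ : Matrix (α × β) (α × β) ℂ) : Prop :=
  ∃ (m : ℕ) (p : Fin m → ℝ) (a : Fin m → α → ℂ) (b : Fin m → β → ℂ),
    (∀ j, 0 ≤ p j) ∧ (∑ j, p j = 1) ∧
    (∀ j, cinner (a j) (a j) = 1) ∧ (∀ j, cinner (b j) (b j) = 1) ∧
    ρ = ∑ j, (p j : ℂ) • vecProj (tensorVec (a j) (b j))

/-- A maximally entangled state on `ℂ^d ⊗ ℂ^d`. -/
def IsMaxEnt {d : ℕ} (Ψ : Fin d × Fin d → ℂ) : Prop :=
  ∃ x y : Fin d → Fin d → ℂ, IsONB x ∧ IsONB y ∧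
    Ψ = ((Real.sqrt d : ℂ)⁻¹) • ∑ j, tensorVec (x j) (y j)

/-- Standard basis vector `e_j` of `ℂ^d`. -/
def ket {d : ℕ} (j : Fin d) : Fin d → ℂ := fun i => if i = j then 1 else 0

/-- The vector `e₀` of `ℂ^d` (first standard basis vector). -/
def e₀ (d : ℕ) : Fin d → ℂ := fun i => if (i : ℕ) = 0 then 1 else 0

namespace Matrix.IsHermitian

open Polynomial

variable {𝕜 n : Type*} [RCLike 𝕜] [Fintype n] [DecidableEq n] {A : Matrix n n 𝕜}

lemma charpoly_mul_self (hA : A.IsHermitian) :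
    (A * A).charpoly = ∏ i, (X - C ((hA.eigenvalues i : 𝕜) ^ 2)) := by
  conv_lhs => rw [hA.spectral_theorem, ← map_mul, Unitary.conjStarAlgAut_apply,
    charpoly_mul_comm, ← mul_assoc]
  simp [diagonal_mul_diagonal, charpoly_diagonal, sq]

lemma sum_comp_sq_eigenvalues (hA : A.IsHermitian) {c : n → ℝ}
    (hc : A * A = diagonal fun i => (c i : 𝕜)) {M : Type*} [AddCommMonoid M] (g : ℝ → M) :
    ∑ i, g (hA.eigenvalues i ^ 2) = ∑ i, g (c i) := by
  have roots_eq (f : n → 𝕜) : (∏ i, (X - C (f i))).roots = Finset.univ.val.map f := by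
    simpa [Multiset.map_map, Function.comp_def] using
      roots_multiset_prod_X_sub_C (Finset.univ.val.map f)
  have hroots := congrArg roots (hA.charpoly_mul_self.symm.trans (congrArg charpoly hc))
  rw [charpoly_diagonal, roots_eq, roots_eq] at hroots
  have hsq : Finset.univ.val.map (fun i => hA.eigenvalues i ^ 2) = Finset.univ.val.map c := by
    apply Multiset.map_injective (RCLike.ofReal_injective (K := 𝕜))
    simpa [Multiset.map_map, Function.comp_def] using hroots
  simp only [Finset.sum_eq_multiset_sum]
  simpa only [Multiset.map_map, Function.comp_def] using congrArg (fun s => (s.map g).sum) hsq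

lemma sum_abs_eigenvalues_of_mul_self_eq_diagonal (hA : A.IsHermitian) {c : n → ℝ}
    (hc : A * A = diagonal fun i => (c i : 𝕜)) :
    ∑ i, |hA.eigenvalues i| = ∑ i, √(c i) := by
  simp only [← Real.sqrt_sq_eq_abs]
  exact hA.sum_comp_sq_eigenvalues hc Real.sqrt

end Matrix.IsHermitian

section PartialTranspose

variable {α β : Type*}

lemma isHermitian_vecProj {n : Type*} (v : n → ℂ) : (vecProj v).IsHermitian := by
  ext i j
  simp [vecProj, mul_comm]

lemma isHermitian_ptB {ρ : Matrix (α × β) (α × β) ℂ} (hρ : ρ.IsHermitian) :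
    (ptB ρ).IsHermitian := by
  ext p q
  simpa [ptB] using hρ.apply (p.1, q.2) (q.1, p.2)

lemma trace_ptB [Fintype α] [Fintype β] (ρ : Matrix (α × β) (α × β) ℂ) :
    (ptB ρ).trace = ρ.trace :=
  rfl

lemma max_zero_neg_eq_half_abs_sub {K : Type*} [Field K] [LinearOrder K] [IsStrictOrderedRing K]
    (x : K) : max 0 (-x) = (|x| - x) / 2 := by
  cases abs_cases x <;> cases max_cases 0 (-x) <;> linarith

lemma negativity_eq_half_sum_abs_sub_trace [Fintype α] [Fintype β] [DecidableEq α]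
    [DecidableEq β] {ρ : Matrix (α × β) (α × β) ℂ} (hρ : (ptB ρ).IsHermitian) :
    negativity ρ = (∑ i, |hρ.eigenvalues i| - ρ.trace.re) / 2 := by
  have htrace : ρ.trace.re = ∑ i, hρ.eigenvalues i := by
    simp [← trace_ptB ρ, hρ.trace_eq_sum_eigenvalues]
  rw [negativity, dif_pos hρ, htrace, ← Finset.sum_sub_distrib, Finset.sum_div]
  simp only [max_zero_neg_eq_half_abs_sub]

end PartialTranspose

section Schmidt

open Matrix

variable {d : ℕ} (lam : Fin d → ℝ)

def schmidtVec : Fin d × Fin d → ℂ :=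
  ∑ j, (lam j : ℂ) • tensorVec (ket j) (ket j)

lemma schmidtVec_apply (i k : Fin d) :
    schmidtVec lam (i, k) = if i = k then (lam i : ℂ) else 0 := by
  simp only [schmidtVec, tensorVec, ket, Finset.sum_apply, Pi.smul_apply, smul_eq_mul, mul_ite,
    mul_one, mul_zero]
  split_ifs with h <;> simp [h]

lemma ptB_vecProj_schmidtVec_apply (p q : Fin d × Fin d) :
    ptB (vecProj (schmidtVec lam)) p q =
      if q = p.swap then ((lam p.1 * lam p.2 : ℝ) : ℂ) else 0 := by
  obtain ⟨i, k⟩ := p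
  obtain ⟨i', k'⟩ := q
  simp only [ptB, vecProj, of_apply, schmidtVec_apply, Prod.swap_prod_mk, Prod.mk.injEq]
  by_cases h₁ : i = k' <;> by_cases h₂ : i' = k <;> simp [h₁, h₂, eq_comm]

lemma ptB_vecProj_schmidtVec_mul_self :
    ptB (vecProj (schmidtVec lam)) * ptB (vecProj (schmidtVec lam)) =
      diagonal fun p => (((lam p.1 * lam p.2) ^ 2 : ℝ) : ℂ) := by
  ext p q
  simp only [mul_apply, ptB_vecProj_schmidtVec_apply, ite_mul, zero_mul,
    Finset.sum_ite_eq', Finset.mem_univ, if_true, Prod.swap_swap, diagonal_apply]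
  by_cases h : p = q
  · subst h; simp [mul_comm, sq]
  · simp [h, Ne.symm h]

lemma trace_vecProj_schmidtVec :
    (vecProj (schmidtVec lam)).trace = ((∑ j, lam j ^ 2 : ℝ) : ℂ) := by
  simp [trace, vecProj, Fintype.sum_prod_type, schmidtVec_apply, sq]

end Schmidt

theorem negativity_schmidt_general (d : ℕ) (lam : Fin d → ℝ)
    (hnn : ∀ j, 0 ≤ lam j) (hsum : ∑ j, (lam j) ^ 2 = 1) :
    negativity (vecProj (∑ j, (lam j : ℂ) • tensorVec (ket j) (ket j))) =
      ((∑ j, lam j) ^ 2 - 1) / 2 := by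
  change negativity (vecProj (schmidtVec lam)) = _
  have hH := isHermitian_ptB (isHermitian_vecProj (schmidtVec lam))
  have habs : ∑ p, |hH.eigenvalues p| = (∑ j, lam j) ^ 2 := by
    rw [hH.sum_abs_eigenvalues_of_mul_self_eq_diagonal (c := fun p => (lam p.1 * lam p.2) ^ 2)
      (ptB_vecProj_schmidtVec_mul_self lam)]
    simp only [Fintype.sum_prod_type, Real.sqrt_sq_eq_abs, abs_mul, abs_of_nonneg (hnn _)]
    rw [sq, Finset.sum_mul_sum]
  have htrace : (vecProj (schmidtVec lam)).trace.re = 1 := by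
    rw [trace_vecProj_schmidtVec, hsum, Complex.ofReal_one, Complex.one_re]
  rw [negativity_eq_half_sum_abs_sub_trace hH, habs, htrace]

/-- the negativity of a pure state with Schmidt coefficients `λ_j`
is `((∑_j λ_j)² - 1)/2`. -/
theorem negativity_schmidt (d : ℕ) (hd : 1 ≤ d) (lam : Fin d → ℝ)
    (hnn : ∀ j, 0 ≤ lam j) (hsum : ∑ j, (lam j) ^ 2 = 1) :
    negativity (vecProj (∑ j, (lam j : ℂ) • tensorVec (ket j) (ket j))) =
      ((∑ j, lam j) ^ 2 - 1) / 2 :=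
  negativity_schmidt_general d lam hnn hsum

end
end

section
/- (Entangled mediator achieving the direct-interaction speed, Eq. (12)) Let X, Y, Z denote the Pauli matrices on ℂ², let H_{C1} = −(I + X + Y + Z), H_{C2} = I − X − Y + Z, and define M = (1/(2√2))( Z ⊗ I ⊗ H_{C1} + I ⊗ Z ⊗ H_{C2} ) on ℂ² ⊗ ℂ² ⊗ ℂ². Let ψ(0) = (e₀⊗e₀⊗e₀ + e₁⊗e₁⊗e₁)/√2 and for t ∈ [0, π/4] let ρ_{AB}(t) = tr_C( exp(−itM) |ψ(0)⟩⟨ψ(0)| exp(itM) ). Then the negativity of ρ_{AB}(t) with respect to the bipartition A : B equals sin t · cos t; in particular at t = π/4 it equals 1/2, so the first two qubits are maximally entangled at the same time arccos(1/√2) = π/4 as in the optimal direct dynamics. -/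
open scoped Matrix Kronecker ComplexOrder

noncomputable section

/-- Standard basis vector `e₀` of `ℂ²`. -/
def qe0 : Fin 2 → ℂ := ![1, 0]

/-- Standard basis vector `e₁` of `ℂ²`. -/
def qe1 : Fin 2 → ℂ := ![0, 1]

/-- Pauli `X` matrix. -/
def pX : Matrix (Fin 2) (Fin 2) ℂ := !![0, 1; 1, 0]

/-- Pauli `Y` matrix. -/
def pY : Matrix (Fin 2) (Fin 2) ℂ := !![0, -Complex.I; Complex.I, 0]

/-- Pauli `Z` matrix. -/
def pZ : Matrix (Fin 2) (Fin 2) ℂ := !![1, 0; 0, -1]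

/-- `H_{C1} = -(I + X + Y + Z)`. -/
def HC1 : Matrix (Fin 2) (Fin 2) ℂ := -((1 : Matrix (Fin 2) (Fin 2) ℂ) + pX + pY + pZ)

/-- `H_{C2} = I - X - Y + Z`. -/
def HC2 : Matrix (Fin 2) (Fin 2) ℂ := (1 : Matrix (Fin 2) (Fin 2) ℂ) - pX - pY + pZ

/-- The Hamiltonian `M = (Z ⊗ I ⊗ H_{C1} + I ⊗ Z ⊗ H_{C2})/(2√2)`. -/
def Ment : Matrix ((Fin 2 × Fin 2) × Fin 2) ((Fin 2 × Fin 2) × Fin 2) ℂ :=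
  (((2 * Real.sqrt 2 : ℝ) : ℂ))⁻¹ •
    ((pZ ⊗ₖ (1 : Matrix (Fin 2) (Fin 2) ℂ)) ⊗ₖ HC1 +
      ((1 : Matrix (Fin 2) (Fin 2) ℂ) ⊗ₖ pZ) ⊗ₖ HC2)

/-- The GHZ-type initial state `(|000⟩ + |111⟩)/√2`. -/
def ψGHZ : (Fin 2 × Fin 2) × Fin 2 → ℂ :=
  (((Real.sqrt 2 : ℝ) : ℂ))⁻¹ •
    (tensorVec (tensorVec qe0 qe0) qe0 + tensorVec (tensorVec qe1 qe1) qe1)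

/-- The reduced state of `AB` at time `t`. -/
def ρABent (t : ℝ) : Matrix (Fin 2 × Fin 2) (Fin 2 × Fin 2) ℂ :=
  ptraceC (NormedSpace.exp ((-(Complex.I * (t : ℂ))) • Ment) * vecProj ψGHZ *
    NormedSpace.exp ((Complex.I * (t : ℂ)) • Ment))

/-! The Hamiltonian is block diagonal with respect to the computational basis of `AB`, and on
the blocks `|00⟩` and `|11⟩` carrying `ψ(0)` it squares to the identity. Hence
`exp(-itM) ψ(0) = cos t · ψ(0) - i sin t · M ψ(0)`, which is again of the form
`|00⟩ ⊗ u + |11⟩ ⊗ v` with `‖u‖² = ‖v‖² = 1/2`. Tracing out `C` leaves the X state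
`½(|00⟩⟨00| + |11⟩⟨11|) + c |00⟩⟨11| + c̄ |11⟩⟨00|` with `c = ⟨v, u⟩ = sin t cos t (i - 1)/√2`;
its partial transpose has spectrum `{½, ½, |c|, -|c|}`, so the negativity is `|c| = sin t cos t`. -/

namespace Matrix

open NormedSpace Nat in
theorem exp_smul_mulVec_of_mulVec_mulVec_eq {n : Type*} [Fintype n] [DecidableEq n]
    {A : Matrix n n ℂ} {v : n → ℂ} (hv : A *ᵥ (A *ᵥ v) = v) (z : ℂ) :
    exp (z • A) *ᵥ v = Complex.cosh z • v + Complex.sinh z • (A *ᵥ v) := by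
  -- any of the (equivalent) matrix norms gives the product topology, in which `HasSum` lives
  let _ := Matrix.linftyOpNormedRing (n := n) (α := ℂ)
  let _ := Matrix.linftyOpNormedAlgebra (n := n) (R := ℂ) (α := ℂ)
  have hpow : ∀ k, (A ^ (2 * k)) *ᵥ v = v := fun k => by
    induction k with
    | zero => simp
    | succ k ih => rw [mul_add, mul_one, pow_add, ← mulVec_mulVec, sq, ← mulVec_mulVec, hv, ih]
  have hexp : HasSum (fun k => ((k ! : ℂ)⁻¹ • (z • A) ^ k) *ᵥ v) (exp (z • A) *ᵥ v) :=
    (exp_series_hasSum_exp' (𝕂 := ℂ) (z • A)).map (mulVec.addMonoidHomLeft v)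
      (continuous_id.matrix_mulVec continuous_const)
  refine hexp.unique (HasSum.even_add_odd ?_ ?_)
  · convert (Complex.hasSum_cosh z).smul_const v using 2 with k
    rw [smul_pow, smul_smul, smul_mulVec, hpow, div_eq_inv_mul]
  · convert (Complex.hasSum_sinh z).smul_const (A *ᵥ v) using 2 with k
    rw [smul_pow, smul_smul, smul_mulVec, pow_succ' A, ← mulVec_mulVec, hpow, div_eq_inv_mul]

theorem IsHermitian.exp_star_smul {n : Type*} [Fintype n] [DecidableEq n] {A : Matrix n n ℂ}
    (hA : A.IsHermitian) (z : ℂ) :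
    NormedSpace.exp (star z • A) = (NormedSpace.exp (z • A))ᴴ := by
  rw [← exp_conjTranspose, conjTranspose_smul, hA.eq]

theorem IsHermitian.kronecker {m n : Type*} {A : Matrix m m ℂ} {B : Matrix n n ℂ}
    (hA : A.IsHermitian) (hB : B.IsHermitian) : (A ⊗ₖ B).IsHermitian := by
  rw [IsHermitian, conjTranspose_kronecker, hA.eq, hB.eq]

open Polynomial in
theorem IsHermitian.eigenvalues_eq_of_charpoly_eq {𝕜 n : Type*} [RCLike 𝕜] [Fintype n]
    [DecidableEq n] {A : Matrix n n 𝕜} (hA : A.IsHermitian) {m : Multiset ℝ}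
    (h : A.charpoly = (m.map fun a : ℝ => X - C (a : 𝕜)).prod) :
    Finset.univ.val.map hA.eigenvalues = m := by
  have hroots := hA.roots_charpoly_eq_eigenvalues
  rw [h, show (m.map fun a : ℝ => X - C (a : 𝕜)) = (m.map RCLike.ofReal).map (X - C ·) by
    rw [Multiset.map_map]; rfl, roots_multiset_prod_X_sub_C, ← Multiset.map_map] at hroots
  exact Multiset.map_injective RCLike.ofReal_injective hroots.symm

end Matrix

theorem mul_vecProj_mul_conjTranspose {n : Type*} [Fintype n] (A : Matrix n n ℂ) (v : n → ℂ) :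
    A * vecProj v * Aᴴ = vecProj (A *ᵥ v) := by
  ext i j
  simp only [vecProj, Matrix.mul_apply, Matrix.of_apply, Matrix.conjTranspose_apply,
    Matrix.mulVec, dotProduct, map_sum, map_mul, Finset.sum_mul, Finset.mul_sum,
    starRingEnd_apply]
  exact Finset.sum_congr rfl fun s _ => Finset.sum_congr rfl fun r _ => by ring

def xState (c : ℂ) : Matrix (Fin 2 × Fin 2) (Fin 2 × Fin 2) ℂ :=
  (1 / 2 : ℂ) • (Matrix.single (0, 0) (0, 0) 1 + Matrix.single (1, 1) (1, 1) 1) +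
    Matrix.single (0, 0) (1, 1) c + Matrix.single (1, 1) (0, 0) (starRingEnd ℂ c)

lemma isHermitian_ptB_xState (c : ℂ) : (ptB (xState c)).IsHermitian := by
  ext ⟨a, b⟩ ⟨a', b'⟩
  fin_cases a <;> fin_cases b <;> fin_cases a' <;> fin_cases b' <;> simp [ptB, xState]

lemma reindex_ptB_xState (c : ℂ) :
    Matrix.reindex finProdFinEquiv finProdFinEquiv (ptB (xState c)) =
      !![1 / 2, 0, 0, 0; 0, 0, c, 0; 0, starRingEnd ℂ c, 0, 0; 0, 0, 0, 1 / 2] := by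
  ext i j
  fin_cases i <;> fin_cases j <;>
    simp [ptB, xState, Matrix.single_apply, finProdFinEquiv, Fin.ext_iff]

open Polynomial in
lemma charpoly_ptB_xState (c : ℂ) : (ptB (xState c)).charpoly =
    (({1 / 2, 1 / 2, ‖c‖, -‖c‖} : Multiset ℝ).map fun a : ℝ => X - C (a : ℂ)).prod := by
  have hc : C c * C (starRingEnd ℂ c) = C (‖c‖ : ℂ) ^ 2 := by
    rw [← C_mul, Complex.mul_conj, Complex.normSq_eq_norm_sq, ← C_pow, Complex.ofReal_pow]
  rw [← Matrix.charpoly_reindex finProdFinEquiv, reindex_ptB_xState, Matrix.charpoly]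
  simp only [Matrix.det_succ_row_zero, Fin.sum_univ_succ]
  simp [Matrix.charmatrix_apply, Fin.succAbove, -mul_eq_mul_left_iff]
  linear_combination (-(X - C 2⁻¹) ^ 2) * hc

theorem negativity_xState (c : ℂ) : negativity (xState c) = ‖c‖ := by
  have hA := isHermitian_ptB_xState c
  rw [negativity, dif_pos hA, Finset.sum_eq_multiset_sum,
    show (fun i => max 0 (-hA.eigenvalues i)) = (fun a => max 0 (-a)) ∘ hA.eigenvalues from rfl,
    ← Multiset.map_map,
    hA.eigenvalues_eq_of_charpoly_eq (charpoly_ptB_xState c)]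
  simp

def ghzLike {γ : Type*} (u v : γ → ℂ) : (Fin 2 × Fin 2) × γ → ℂ :=
  tensorVec (tensorVec qe0 qe0) u + tensorVec (tensorVec qe1 qe1) v

lemma smul_ghzLike_add_smul_ghzLike {γ : Type*} (a b : ℂ) (u v u' v' : γ → ℂ) :
    a • ghzLike u v + b • ghzLike u' v' = ghzLike (a • u + b • u') (a • v + b • v') := by
  funext ⟨⟨i, j⟩, k⟩
  simp only [ghzLike, tensorVec, Pi.add_apply, Pi.smul_apply, smul_eq_mul]
  ring

lemma ptraceC_vecProj_ghzLike {γ : Type*} [Fintype γ] {u v : γ → ℂ}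
    (hu : cinner u u = 1 / 2) (hv : cinner v v = 1 / 2) :
    ptraceC (vecProj (ghzLike u v)) = xState (cinner v u) := by
  simp only [cinner, mul_comm] at hu hv
  ext ⟨a, b⟩ ⟨a', b'⟩
  fin_cases a <;> fin_cases b <;> fin_cases a' <;> fin_cases b' <;>
    simp [ptraceC, vecProj, ghzLike, tensorVec, qe0, qe1, xState, cinner, mul_comm, hu, hv]

lemma isHermitian_Ment : Ment.IsHermitian := by
  have hpZ : pZ.IsHermitian := by
    ext i j; fin_cases i <;> fin_cases j <;> simp [pZ]
  have hHC1 : HC1.IsHermitian := by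
    ext i j; fin_cases i <;> fin_cases j <;> simp [HC1, pX, pY, pZ]
  have hHC2 : HC2.IsHermitian := by
    ext i j; fin_cases i <;> fin_cases j <;> simp [HC2, pX, pY, pZ, sub_eq_add_neg]
  refine Matrix.IsHermitian.smul ?_ (by simp [IsSelfAdjoint, ← Complex.ofReal_inv])
  exact ((hpZ.kronecker Matrix.isHermitian_one).kronecker hHC1).add
    ((Matrix.isHermitian_one.kronecker hpZ).kronecker hHC2)

lemma ψGHZ_eq_ghzLike :
    ψGHZ = ghzLike ((Real.sqrt 2 : ℂ)⁻¹ • qe0) ((Real.sqrt 2 : ℂ)⁻¹ • qe1) := by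
  funext ⟨⟨i, j⟩, k⟩
  simp only [ψGHZ, ghzLike, tensorVec, Pi.add_apply, Pi.smul_apply, smul_eq_mul]
  ring

def MentψGHZ : (Fin 2 × Fin 2) × Fin 2 → ℂ :=
  ghzLike (-((1 + Complex.I) / 2) • qe1) (((1 - Complex.I) / 2) • qe0)

lemma Ment_mulVec_ψGHZ : Ment *ᵥ ψGHZ = MentψGHZ := by
  funext ⟨⟨a, b⟩, c⟩
  fin_cases a <;> fin_cases b <;> fin_cases c <;>
    simp [Ment, ψGHZ, MentψGHZ, ghzLike, Matrix.mulVec, dotProduct, Fintype.sum_prod_type,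
      tensorVec, qe0, qe1, pX, pY, pZ, HC1, HC2, Complex.ext_iff] <;> ring_nf <;> norm_num

lemma Ment_mulVec_MentψGHZ : Ment *ᵥ MentψGHZ = ψGHZ := by
  funext ⟨⟨a, b⟩, c⟩
  fin_cases a <;> fin_cases b <;> fin_cases c <;>
    simp [Ment, ψGHZ, MentψGHZ, ghzLike, Matrix.mulVec, dotProduct, Fintype.sum_prod_type,
      tensorVec, qe0, qe1, pX, pY, pZ, HC1, HC2, Complex.ext_iff] <;> ring_nf <;> norm_num

lemma exp_Ment_mulVec_ψGHZ (t : ℝ) :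
    NormedSpace.exp ((-(Complex.I * t)) • Ment) *ᵥ ψGHZ =
      (Real.cos t : ℂ) • ψGHZ + (-(Complex.I * Real.sin t)) • MentψGHZ := by
  rw [Matrix.exp_smul_mulVec_of_mulVec_mulVec_eq (by rw [Ment_mulVec_ψGHZ, Ment_mulVec_MentψGHZ]),
    Ment_mulVec_ψGHZ, mul_comm, ← neg_mul, Complex.cosh_mul_I, Complex.sinh_mul_I,
    Complex.cos_neg, Complex.sin_neg, Complex.ofReal_cos, Complex.ofReal_sin, neg_mul, mul_comm]

lemma ρABent_eq_xState (t : ℝ) :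
    ρABent t = xState (Real.sin t * Real.cos t * ((Complex.I - 1) / Real.sqrt 2)) := by
  have hexp : NormedSpace.exp ((Complex.I * t) • Ment) =
      (NormedSpace.exp ((-(Complex.I * t)) • Ment))ᴴ := by
    simpa using isHermitian_Ment.exp_star_smul (-(Complex.I * t))
  rw [ρABent, hexp, mul_vecProj_mul_conjTranspose,
    exp_Ment_mulVec_ψGHZ, ψGHZ_eq_ghzLike, MentψGHZ, smul_ghzLike_add_smul_ghzLike,
    ptraceC_vecProj_ghzLike]
  · congr 1
    simp [cinner, Fin.sum_univ_two, qe0, qe1, map_ofNat, -Complex.ofReal_cos, -Complex.ofReal_sin]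
    linear_combination (Real.sin t * Real.cos t * (Real.sqrt 2 : ℂ)⁻¹) * Complex.I_sq
  all_goals
    simp [cinner, Fin.sum_univ_two, qe0, qe1, map_ofNat, Complex.ext_iff, Complex.cos_ofReal_re,
      Complex.sin_ofReal_re]
    ring_nf
    rw [Real.sq_sqrt zero_le_two, and_true]
    linear_combination (1 / 2) * Real.sin_sq_add_cos_sq t

lemma norm_I_sub_one_div_sqrt_two : ‖(Complex.I - 1) / (Real.sqrt 2 : ℂ)‖ = 1 := by
  have h : ‖Complex.I - 1‖ = Real.sqrt 2 := by
    rw [Complex.norm_eq_sqrt_sq_add_sq]; norm_num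
  rw [norm_div, h, Complex.norm_real, Real.norm_of_nonneg (Real.sqrt_nonneg 2),
    div_self (by positivity)]

theorem negativity_ρABent (t : ℝ) : negativity (ρABent t) = |Real.sin t * Real.cos t| := by
  rw [ρABent_eq_xState, negativity_xState, norm_mul, norm_I_sub_one_div_sqrt_two, mul_one,
    ← Complex.ofReal_mul, Complex.norm_real, Real.norm_eq_abs]

/-- entangled mediator achieving the direct-interaction speed:
the negativity of the reduced state equals `sin t · cos t`, reaching the maximal
value `1/2` at `t = π/4 = arccos(1/√2)`. -/
theorem entangled_mediator_speed :
    (∀ t ∈ Set.Icc (0 : ℝ) (Real.pi / 4),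
      negativity (ρABent t) = Real.sin t * Real.cos t) ∧
    negativity (ρABent (Real.pi / 4)) = 1 / 2 ∧
    Real.arccos (Real.sqrt 2)⁻¹ = Real.pi / 4 := by
  have hneg : ∀ t ∈ Set.Icc (0 : ℝ) (Real.pi / 4),
      negativity (ρABent t) = Real.sin t * Real.cos t := by
    rintro t ⟨ht₀, ht₁⟩
    have hπ := Real.pi_pos
    rw [negativity_ρABent, abs_of_nonneg]
    exact mul_nonneg (Real.sin_nonneg_of_nonneg_of_le_pi ht₀ (by linarith))
      (Real.cos_nonneg_of_mem_Icc ⟨by linarith, by linarith⟩)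
  have hinv : (Real.sqrt 2)⁻¹ = Real.sqrt 2 / 2 := by
    field_simp; simp
  refine ⟨hneg, ?_, ?_⟩
  · rw [hneg _ ⟨by positivity, le_rfl⟩, Real.sin_pi_div_four, Real.cos_pi_div_four, ← sq, div_pow,
      Real.sq_sqrt zero_le_two]
    norm_num
  · rw [hinv, ← Real.cos_pi_div_four, Real.arccos_cos (by positivity) (by linarith [Real.pi_pos])]
end
end
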